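/- arXiv:1008.1773 — 7 statements merged into one kernel-verified Lean document; each statement's English description precedes it below -/
import Mathlib

section
/- In the ℂ(t)-algebra A' = ℂ(t)[σ₁, σ₂]/⟨(σ₁ - tσ₂)(σ₁ - t^{-1}σ₂)⟩, the relation [k+ℓ]_t · σ₁^k σ₂^ℓ = [k]_t · σ₁^{k+ℓ} + [ℓ]_t · σ₂^{k+ℓ} holds for all k, ℓ ≥ 0. -/
/-- The `t`-integer `[k]_t = t^{1-k} + t^{3-k} + ⋯ + t^{k-1}`. -/
noncomputable def tint {K : Type*} [Field K] (t : K) (k : ℕ) : K :=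
  ∑ i ∈ Finset.range k, t ^ ((1 - (k : ℤ)) + 2 * i)

/-- The field `ℂ(t)` of rational functions. -/
abbrev Kt : Type := RatFunc ℂ

/-- The indeterminate `t ∈ ℂ(t)`. -/
noncomputable def tt : Kt := RatFunc.X

/-- The ideal `⟨(σ₁ - tσ₂)(σ₁ - t⁻¹σ₂)⟩` of `ℂ(t)[σ₁, σ₂]`. -/
noncomputable def relIdeal : Ideal (MvPolynomial (Fin 2) Kt) :=
  Ideal.span {(MvPolynomial.X 0 - MvPolynomial.C tt * MvPolynomial.X 1) *
      (MvPolynomial.X 0 - MvPolynomial.C tt⁻¹ * MvPolynomial.X 1)}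

/-- The algebra `A' = ℂ(t)[σ₁, σ₂]/⟨(σ₁ - tσ₂)(σ₁ - t⁻¹σ₂)⟩`. -/
abbrev Aprime : Type := MvPolynomial (Fin 2) Kt ⧸ relIdeal

/-- The generators `σ₁, σ₂` of `A'` (indexed by `Fin 2`). -/
noncomputable def σA (i : Fin 2) : Aprime := Ideal.Quotient.mk relIdeal (MvPolynomial.X i)

/-- Scalars of `ℂ(t)` inside `A'`. -/
noncomputable def cst (a : Kt) : Aprime := Ideal.Quotient.mk relIdeal (MvPolynomial.C a)

/-!
Since `t ≠ t⁻¹`, the relation splits into two distinct linear factors: with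
`p = (x - t⁻¹y)/(t - t⁻¹)` and `q = (ty - x)/(t - t⁻¹)` one has `pq = 0`, `x = tp + t⁻¹q` and
`y = p + q`. Hence in positive degree `n = k + ℓ` every monomial separates,
`xᵏyˡ = tᵏpⁿ + t⁻ᵏqⁿ`, and the claim reduces to the scalar identity
`[k+ℓ]_t tᵏ = [k]_t t^(k+ℓ) + [ℓ]_t` together with its image under `t ↦ t⁻¹`, which fixes `[m]_t`.
-/

section TInteger

variable {K : Type*} [Field K]

@[simp]
lemma tint_zero (t : K) : tint t 0 = 0 := by
  simp [tint]

lemma tint_add_mul_pow {t : K} (ht : t ≠ 0) (k ℓ : ℕ) :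
    tint t (k + ℓ) * t ^ k = tint t k * t ^ (k + ℓ) + tint t ℓ := by
  simp only [tint, Finset.sum_mul]
  rw [add_comm k ℓ, Finset.sum_range_add, add_comm]
  congr 1 <;> refine Finset.sum_congr rfl fun i _ => ?_ <;>
    simp only [← zpow_natCast, ← zpow_add₀ ht] <;> congr 1 <;> push_cast <;> ring

lemma tint_inv (t : K) (m : ℕ) : tint t⁻¹ m = tint t m := by
  rw [tint, ← Finset.sum_range_reflect, tint]
  refine Finset.sum_congr rfl fun i hi => ?_
  have hcast : ((m - 1 - i : ℕ) : ℤ) = m - 1 - i := by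
    have := Finset.mem_range.mp hi
    omega
  rw [inv_zpow', hcast]
  ring_nf

end TInteger

section MulEqZero

variable {S R : Type*} [CommSemiring S] [CommSemiring R] [Algebra S R] {p q : R}

lemma pow_mul_pow_eq_zero_of_mul_eq_zero (h : p * q = 0) {k ℓ : ℕ} (hk : k ≠ 0) (hℓ : ℓ ≠ 0) :
    p ^ k * q ^ ℓ = 0 := by
  obtain ⟨k, rfl⟩ := Nat.exists_eq_succ_of_ne_zero hk
  obtain ⟨ℓ, rfl⟩ := Nat.exists_eq_succ_of_ne_zero hℓ
  rw [pow_succ, pow_succ', mul_assoc, ← mul_assoc p, h, zero_mul, mul_zero]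

lemma add_pow_of_mul_eq_zero (h : p * q = 0) {m : ℕ} (hm : m ≠ 0) :
    (p + q) ^ m = p ^ m + q ^ m := by
  induction m with
  | zero => exact absurd rfl hm
  | succ m ih =>
    rcases eq_or_ne m 0 with rfl | hm'
    · simp
    have hpq : p ^ m * q = 0 := by
      simpa using pow_mul_pow_eq_zero_of_mul_eq_zero h hm' one_ne_zero
    have hqp : q ^ m * p = 0 := by
      simpa [mul_comm] using pow_mul_pow_eq_zero_of_mul_eq_zero h one_ne_zero hm'
    rw [pow_succ, ih hm', add_mul, mul_add, mul_add, hpq, hqp, ← pow_succ, ← pow_succ, add_zero,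
      zero_add]

lemma smul_add_smul_pow_of_mul_eq_zero (h : p * q = 0) (a b : S) {m : ℕ} (hm : m ≠ 0) :
    (a • p + b • q) ^ m = a ^ m • p ^ m + b ^ m • q ^ m := by
  rw [add_pow_of_mul_eq_zero (by rw [smul_mul_smul_comm, h, smul_zero]) hm, smul_pow, smul_pow]

lemma smul_add_smul_pow_mul_pow_of_mul_eq_zero (h : p * q = 0) (a b c d : S) {k ℓ : ℕ}
    (hkℓ : k + ℓ ≠ 0) :
    (a • p + b • q) ^ k * (c • p + d • q) ^ ℓ =
      (a ^ k * c ^ ℓ) • p ^ (k + ℓ) + (b ^ k * d ^ ℓ) • q ^ (k + ℓ) := by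
  rcases eq_or_ne k 0 with rfl | hk
  · rw [zero_add] at hkℓ
    simp only [pow_zero, one_mul, zero_add]
    exact smul_add_smul_pow_of_mul_eq_zero h c d hkℓ
  rcases eq_or_ne ℓ 0 with rfl | hℓ
  · simp only [pow_zero, mul_one, add_zero]
    exact smul_add_smul_pow_of_mul_eq_zero h a b hk
  rw [smul_add_smul_pow_of_mul_eq_zero h a b hk, smul_add_smul_pow_of_mul_eq_zero h c d hℓ,
    add_mul, mul_add, mul_add, smul_mul_smul_comm, smul_mul_smul_comm, smul_mul_smul_comm,
    smul_mul_smul_comm, pow_mul_pow_eq_zero_of_mul_eq_zero h hk hℓ, mul_comm (q ^ k),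
    pow_mul_pow_eq_zero_of_mul_eq_zero h hℓ hk, ← pow_add, ← pow_add]
  simp

end MulEqZero

lemma exists_mul_eq_zero_of_mul_sub_smul_eq_zero {K R : Type*} [Field K] [CommRing R]
    [Algebra K R] {t : K} (ht : t⁻¹ ≠ t) {x y : R} (h : (x - t • y) * (x - t⁻¹ • y) = 0) :
    ∃ p q : R, p * q = 0 ∧ x = t • p + t⁻¹ • q ∧ y = p + q := by
  have ht0 : t ≠ 0 := by
    rintro rfl
    simp at ht
  have hd : t ^ 2 - 1 ≠ 0 := by
    contrapose! ht
    field_simp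
    linear_combination -ht
  refine ⟨(t - t⁻¹)⁻¹ • (x - t⁻¹ • y), (t - t⁻¹)⁻¹ • (t • y - x), ?_, ?_, ?_⟩
  · rw [smul_mul_smul_comm, ← neg_sub x, mul_neg, mul_comm (x - t⁻¹ • y), h, neg_zero, smul_zero]
  · match_scalars <;> field_simp <;> ring
  · match_scalars <;> field_simp <;> ring

theorem tint_smul_pow_mul_pow {K R : Type*} [Field K] [CommRing R] [Algebra K R] {t : K}
    (ht : t⁻¹ ≠ t) {x y : R} (h : (x - t • y) * (x - t⁻¹ • y) = 0) (k ℓ : ℕ) :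
    tint t (k + ℓ) • (x ^ k * y ^ ℓ) = tint t k • x ^ (k + ℓ) + tint t ℓ • y ^ (k + ℓ) := by
  rcases eq_or_ne (k + ℓ) 0 with hn | hn
  · obtain ⟨rfl, rfl⟩ := Nat.add_eq_zero_iff.mp hn
    simp
  have ht0 : t ≠ 0 := by
    rintro rfl
    simp at ht
  obtain ⟨p, q, hpq, rfl, rfl⟩ := exists_mul_eq_zero_of_mul_sub_smul_eq_zero ht h
  rw [show p + q = (1 : K) • p + (1 : K) • q by simp only [one_smul],
    smul_add_smul_pow_mul_pow_of_mul_eq_zero hpq _ _ _ _ hn,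
    smul_add_smul_pow_of_mul_eq_zero hpq _ _ hn, smul_add_smul_pow_of_mul_eq_zero hpq _ _ hn]
  match_scalars
  · simpa using tint_add_mul_pow ht0 k ℓ
  · simpa [tint_inv] using tint_add_mul_pow (inv_ne_zero ht0) k ℓ

lemma cst_mul (a : Kt) (z : Aprime) : cst a * z = a • z :=
  (Algebra.smul_def a z).symm

lemma tt_inv_ne : tt⁻¹ ≠ tt := by
  intro h
  have htt : tt * tt = 1 := by
    calc tt * tt = tt⁻¹ * tt := by rw [h]
      _ = 1 := inv_mul_cancel₀ RatFunc.X_ne_zero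
  have hX : (Polynomial.X * Polynomial.X : Polynomial ℂ) = 1 := by
    apply RatFunc.algebraMap_injective ℂ
    rw [map_mul, map_one, RatFunc.algebraMap_X]
    exact htt
  simpa using congrArg (Polynomial.coeff · 0) hX

lemma σA_relation : (σA 0 - tt • σA 1) * (σA 0 - tt⁻¹ • σA 1) = 0 := by
  simp only [← cst_mul, σA, cst, ← map_mul, ← map_sub, Ideal.Quotient.eq_zero_iff_mem]
  exact Ideal.subset_span rfl

/-- In `A' = ℂ(t)[σ₁,σ₂]/⟨(σ₁ - tσ₂)(σ₁ - t⁻¹σ₂)⟩` one has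
`[k+ℓ]_t · σ₁^k σ₂^ℓ = [k]_t · σ₁^{k+ℓ} + [ℓ]_t · σ₂^{k+ℓ}` for all `k, ℓ ≥ 0`. -/
theorem tint_smul_monomial (k ℓ : ℕ) :
    cst (tint tt (k + ℓ)) * (σA 0 ^ k * σA 1 ^ ℓ) =
      cst (tint tt k) * σA 0 ^ (k + ℓ) + cst (tint tt ℓ) * σA 1 ^ (k + ℓ) := by
  simpa only [cst_mul] using tint_smul_pow_mul_pow tt_inv_ne σA_relation k ℓ
end

section
/- Let q > 0 be a real number. Then the function G(x) = ([x]_q)² = ((q^x - q^{-x})/(q - q^{-1}))² is superadditive on [0, ∞): G(x+y) ≥ G(x) + G(y) for all x, y ≥ 0, with equality if and only if xy = 0. -/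
/-!
`G(x + y) - G(x) - G(y) = [x]_q [y]_q (q^{x+y} + q^{-(x+y)})`, the `q`-form of
`sinh²(a + b) - sinh² a - sinh² b = 2 sinh a sinh b cosh (a + b)`. Since `[x]_q > 0` for `x > 0`
and `[0]_q = 0`, the right-hand side is nonnegative and vanishes exactly when `x y = 0`.
-/

/-- `G(x) = ([x]_q)² = ((q^x - q^{-x})/(q - q⁻¹))²` for real `q > 0`. -/
noncomputable def Gfun (q x : ℝ) : ℝ := ((q ^ x - q ^ (-x)) / (q - q⁻¹)) ^ 2

open Real

noncomputable def qNumber (q x : ℝ) : ℝ := (q ^ x - q ^ (-x)) / (q - q⁻¹)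

theorem Gfun_eq_qNumber_sq (q x : ℝ) : Gfun q x = qNumber q x ^ 2 := rfl

@[simp]
theorem qNumber_zero (q : ℝ) : qNumber q 0 = 0 := by
  simp [qNumber]

theorem qNumber_pos {q x : ℝ} (hq : 0 < q) (hq1 : q ≠ 1) (hx : 0 < x) : 0 < qNumber q x := by
  rcases hq1.lt_or_gt with hlt | hgt
  · refine div_pos_of_neg_of_neg ?_ ?_
    · have h1 : q ^ x < 1 := rpow_lt_one hq.le hlt hx
      have h2 : 1 < q ^ (-x) := one_lt_rpow_of_pos_of_lt_one_of_neg hq hlt (neg_neg_of_pos hx)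
      linarith
    · have : 1 < q⁻¹ := one_lt_inv₀ hq |>.mpr hlt
      linarith
  · refine div_pos ?_ ?_
    · have h1 : 1 < q ^ x := one_lt_rpow hgt hx
      have h2 : q ^ (-x) < 1 := rpow_lt_one_of_one_lt_of_neg hgt (neg_neg_of_pos hx)
      linarith
    · have : q⁻¹ < 1 := inv_lt_one_of_one_lt₀ hgt
      linarith

theorem qNumber_nonneg {q x : ℝ} (hq : 0 < q) (hq1 : q ≠ 1) (hx : 0 ≤ x) : 0 ≤ qNumber q x := by
  rcases hx.eq_or_lt with rfl | hx
  · simp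
  · exact (qNumber_pos hq hq1 hx).le

theorem qNumber_eq_zero_iff {q x : ℝ} (hq : 0 < q) (hq1 : q ≠ 1) (hx : 0 ≤ x) :
    qNumber q x = 0 ↔ x = 0 := by
  refine ⟨fun h => ?_, fun h => h ▸ qNumber_zero q⟩
  by_contra hx0
  exact (qNumber_pos hq hq1 (hx.lt_of_ne' hx0)).ne' h

theorem sub_inv_mul_sq_sub_sub {u v : ℝ} (hu : u ≠ 0) (hv : v ≠ 0) :
    (u * v - (u * v)⁻¹) ^ 2 - (u - u⁻¹) ^ 2 - (v - v⁻¹) ^ 2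
      = (u - u⁻¹) * (v - v⁻¹) * (u * v + (u * v)⁻¹) := by
  field_simp
  ring

theorem Gfun_add_sub_Gfun_sub_Gfun {q : ℝ} (hq : 0 < q) (x y : ℝ) :
    Gfun q (x + y) - Gfun q x - Gfun q y
      = qNumber q x * qNumber q y * (q ^ (x + y) + q ^ (-(x + y))) := by
  have key := sub_inv_mul_sq_sub_sub (rpow_pos_of_pos hq x).ne' (rpow_pos_of_pos hq y).ne'
  simp only [Gfun_eq_qNumber_sq, qNumber, rpow_neg hq.le, rpow_add hq]
  linear_combination (q - q⁻¹)⁻¹ ^ 2 * key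

/-- For real `q > 0` (`q ≠ 1`), the function `G(x) = ([x]_q)²` is
superadditive on `[0, ∞)`: `G(x+y) ≥ G(x) + G(y)` for all `x, y ≥ 0`, with equality if
and only if `xy = 0`. -/
theorem Gfun_superadditive (q : ℝ) (hq : 0 < q) (hq1 : q ≠ 1) (x y : ℝ)
    (hx : 0 ≤ x) (hy : 0 ≤ y) :
    Gfun q x + Gfun q y ≤ Gfun q (x + y) ∧
      (Gfun q (x + y) = Gfun q x + Gfun q y ↔ x * y = 0) := by
  have hdiff := Gfun_add_sub_Gfun_sub_Gfun hq x y
  have hpos : 0 < q ^ (x + y) + q ^ (-(x + y)) := by positivity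
  have hprod : 0 ≤ qNumber q x * qNumber q y :=
    mul_nonneg (qNumber_nonneg hq hq1 hx) (qNumber_nonneg hq hq1 hy)
  refine ⟨by nlinarith, ?_⟩
  rw [← sub_eq_zero, ← sub_sub, hdiff, mul_eq_zero, or_iff_left hpos.ne', mul_eq_zero,
    mul_eq_zero, qNumber_eq_zero_iff hq hq1 hx, qNumber_eq_zero_iff hq hq1 hy]
end

section
/- Let n ≥ 2 be an integer and q = e^{iπ/(2n)}, so Q = π/(2n). Then the function g(x) = (q^x - q^{-x})² = -4sin²(Qx) satisfies g(x+y) - g(x) - g(y) = (q^x - q^{-x})(q^y - q^{-y})(q^{x+y} + q^{-(x+y)}), and for x, y, x+y ∈ [0, n] we have g(x+y) ≤ g(x) + g(y), with equality iff xy(n - x - y) = 0. Consequently G(x) = g(x)/(q - q^{-1})² = sin²(Qx)/sin²(Q) is superadditive on [0, n], with equality iff xy(n - x - y) = 0. -/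
open Real Complex

/-- `Q = π/(2n)`. -/
noncomputable def Qang (n : ℕ) : ℝ := Real.pi / (2 * n)

/-- `q^x = e^{iQx}` for `q = e^{iπ/(2n)}`. -/
noncomputable def qpow (n : ℕ) (x : ℝ) : ℂ := Complex.exp (Qang n * x * Complex.I)

/-- `g(x) = (q^x - q^{-x})² = -4 sin²(Qx)` (real form). -/
noncomputable def gfun (n : ℕ) (x : ℝ) : ℝ := -4 * Real.sin (Qang n * x) ^ 2

/-- `G(x) = ([x]_q)² = sin²(Qx)/sin²(Q)`. -/
noncomputable def GfunC (n : ℕ) (x : ℝ) : ℝ := Real.sin (Qang n * x) ^ 2 / Real.sin (Qang n) ^ 2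

lemma sin_sq_key (a b : ℝ) :
    Real.sin (a + b) ^ 2 - Real.sin a ^ 2 - Real.sin b ^ 2
      = 2 * Real.sin a * Real.sin b * Real.cos (a + b) := by
  rw [Real.sin_add, Real.cos_add]
  nlinarith [Real.sin_sq_add_cos_sq a, Real.sin_sq_add_cos_sq b]

lemma qpow_sub_inv (n : ℕ) (t : ℝ) :
    qpow n t - (qpow n t)⁻¹ = 2 * Real.sin (Qang n * t) * Complex.I := by
  rw [qpow, ← Complex.exp_neg, ← neg_mul, Complex.exp_mul_I, Complex.exp_mul_I,
    Complex.cos_neg, Complex.sin_neg]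
  push_cast
  ring

lemma alg_id (a b : ℂ) (ha : a ≠ 0) (hb : b ≠ 0) :
    (a*b - (a*b)⁻¹)^2 - (a - a⁻¹)^2 - (b - b⁻¹)^2
      = (a - a⁻¹)*(b - b⁻¹)*(a*b + (a*b)⁻¹) := by
  field_simp
  ring

set_option maxHeartbeats 1000000 in
/-- Let `n ≥ 2` and `q = e^{iπ/(2n)}`, `Q = π/(2n)`. The function
`g(x) = (q^x - q^{-x})² = -4sin²(Qx)` satisfies the identity
`g(x+y) - g(x) - g(y) = (q^x - q^{-x})(q^y - q^{-y})(q^{x+y} + q^{-(x+y)})`, is real, and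
for `x, y, x+y ∈ [0, n]` one has `g(x+y) ≤ g(x) + g(y)` with equality iff
`xy(n - x - y) = 0`. Consequently `G(x) = g(x)/(q - q⁻¹)² = sin²(Qx)/sin²(Q)` is
superadditive on `[0, n]`, with equality iff `xy(n - x - y) = 0`. -/
theorem g_subadditive_root_of_unity (n : ℕ) (hn : 2 ≤ n) (x y : ℝ)
    (hx : 0 ≤ x) (hy : 0 ≤ y) (hxy : x + y ≤ n) :
    ((qpow n (x + y) - (qpow n (x + y))⁻¹) ^ 2 - (qpow n x - (qpow n x)⁻¹) ^ 2 -
        (qpow n y - (qpow n y)⁻¹) ^ 2 =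
        (qpow n x - (qpow n x)⁻¹) * (qpow n y - (qpow n y)⁻¹) *
          (qpow n (x + y) + (qpow n (x + y))⁻¹)) ∧
    ((qpow n x - (qpow n x)⁻¹) ^ 2 = (gfun n x : ℂ)) ∧
    (gfun n (x + y) ≤ gfun n x + gfun n y ∧
      (gfun n (x + y) = gfun n x + gfun n y ↔ x * y * (n - x - y) = 0)) ∧
    (GfunC n x + GfunC n y ≤ GfunC n (x + y) ∧
      (GfunC n (x + y) = GfunC n x + GfunC n y ↔ x * y * (n - x - y) = 0)) := by
  have hnR : (0 : ℝ) < n := by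
    have : (0:ℕ) < n := by omega
    exact_mod_cast this
  set Q := Qang n with hQdef
  have hQpos : 0 < Q := by
    rw [hQdef, Qang]
    positivity
  have hQn : Q * n = Real.pi / 2 := by
    rw [hQdef, Qang]
    field_simp
  -- bounds on angles
  have ha0 : 0 ≤ Q * x := by positivity
  have hb0 : 0 ≤ Q * y := by positivity
  have hab : Q * x + Q * y ≤ Real.pi / 2 := by
    rw [← hQn, ← mul_add]
    exact mul_le_mul_of_nonneg_left hxy hQpos.le
  have hax : Q * x ≤ Real.pi / 2 := by nlinarith
  have hay : Q * y ≤ Real.pi / 2 := by nlinarith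
  have hpi : Real.pi / 2 < Real.pi := by
    have := Real.pi_pos; linarith
  have hsinx : 0 ≤ Real.sin (Q * x) := Real.sin_nonneg_of_nonneg_of_le_pi ha0 (by linarith)
  have hsiny : 0 ≤ Real.sin (Q * y) := Real.sin_nonneg_of_nonneg_of_le_pi hb0 (by linarith)
  have hcos : 0 ≤ Real.cos (Q * x + Q * y) :=
    Real.cos_nonneg_of_mem_Icc ⟨by linarith, hab⟩
  have hkey := sin_sq_key (Q * x) (Q * y)
  have hdist : Q * (x + y) = Q * x + Q * y := by ring
  -- equivalence of zero conditions
  have hzero : (2 * Real.sin (Q * x) * Real.sin (Q * y) * Real.cos (Q * x + Q * y) = 0)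
      ↔ x * y * ((n : ℝ) - x - y) = 0 := by
    constructor
    · intro h
      rcases mul_eq_zero.1 h with h1 | hc
      · rcases mul_eq_zero.1 h1 with h2 | hsy
        · rcases mul_eq_zero.1 h2 with h3 | hsx
          · norm_num at h3
          · have : Q * x = 0 := by
              by_contra hne
              have hax' : 0 < Q * x := lt_of_le_of_ne ha0 (Ne.symm hne)
              exact absurd hsx (ne_of_gt (Real.sin_pos_of_pos_of_lt_pi hax' (by linarith)))
            have : x = 0 := by
              rcases mul_eq_zero.1 this with h | h
              · exact absurd h (ne_of_gt hQpos)
              · exact h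
            rw [this]; ring
        · have : Q * y = 0 := by
            by_contra hne
            have hay' : 0 < Q * y := lt_of_le_of_ne hb0 (Ne.symm hne)
            exact absurd hsy (ne_of_gt (Real.sin_pos_of_pos_of_lt_pi hay' (by linarith)))
          have : y = 0 := by
            rcases mul_eq_zero.1 this with h | h
            · exact absurd h (ne_of_gt hQpos)
            · exact h
          rw [this]; ring
      · -- cos (Qx+Qy) = 0 with Qx+Qy ∈ [0, π/2] forces Qx+Qy = π/2
        have hmem : Q * x + Q * y = Real.pi / 2 := by
          rcases Real.cos_eq_zero_iff.1 hc with ⟨k, hk⟩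
          have h1 : (0:ℝ) ≤ 2*(k:ℝ)+1 := by nlinarith [Real.pi_pos]
          have h2 : 2*(k:ℝ)+1 ≤ 1 := by nlinarith [Real.pi_pos]
          have h1' : (0:ℤ) ≤ 2*k+1 := by exact_mod_cast h1
          have h2' : (2:ℤ)*k+1 ≤ 1 := by exact_mod_cast h2
          have hk0 : k = 0 := by omega
          rw [hk0] at hk
          simpa using hk
        have : x + y = (n : ℝ) := by
          have h1 : Q * (x + y) = Q * n := by rw [hQn, mul_add]; exact hmem
          exact mul_left_cancel₀ (ne_of_gt hQpos) h1
        have : (n : ℝ) - x - y = 0 := by linarith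
        rw [this]; ring
    · intro h
      rcases mul_eq_zero.1 h with h1 | hc
      · rcases mul_eq_zero.1 h1 with h2 | h3
        · rw [h2]; simp
        · rw [h3]; simp
      · have : Q * x + Q * y = Real.pi / 2 := by
          rw [← mul_add]
          have : x + y = (n : ℝ) := by linarith
          rw [this, hQn]
        rw [this, Real.cos_pi_div_two]; ring
  -- real parts
  have hineq : gfun n (x + y) ≤ gfun n x + gfun n y := by
    simp only [gfun, ← hQdef, hdist]
    linarith [hkey, mul_nonneg (mul_nonneg hsinx hsiny) hcos]
  have heqiff : gfun n (x + y) = gfun n x + gfun n y ↔ x * y * ((n : ℝ) - x - y) = 0 := by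
    rw [← hzero]
    simp only [gfun, ← hQdef, hdist]
    constructor
    · intro h; linarith [hkey]
    · intro h; linarith [hkey]
  have hn2 : (2:ℝ) ≤ n := by exact_mod_cast hn
  have hsQ : 0 < Real.sin Q := by
    apply Real.sin_pos_of_pos_of_lt_pi hQpos
    nlinarith [hQn, hQpos, Real.pi_pos]
  refine ⟨?_, ?_, ⟨hineq, heqiff⟩, ?_, ?_⟩
  · have ha : qpow n x ≠ 0 := Complex.exp_ne_zero _
    have hb : qpow n y ≠ 0 := Complex.exp_ne_zero _
    have hxy0 : qpow n (x + y) = qpow n x * qpow n y := by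
      rw [qpow, qpow, qpow, ← Complex.exp_add]
      push_cast
      ring_nf
    rw [hxy0]
    exact alg_id _ _ ha hb
  · rw [qpow_sub_inv, gfun]
    have : ((2 : ℂ) * Real.sin (Qang n * x) * Complex.I) ^ 2
        = 4 * (Real.sin (Qang n * x) : ℂ) ^ 2 * Complex.I ^ 2 := by ring
    rw [this, Complex.I_sq]
    push_cast
    ring
  · have hs2 : (0:ℝ) < Real.sin Q ^ 2 := by positivity
    simp only [GfunC, ← hQdef, hdist, ← add_div]
    rw [div_le_div_iff_of_pos_right hs2]
    linarith [hkey, mul_nonneg (mul_nonneg hsinx hsiny) hcos]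
  · have hs2 : Real.sin Q ^ 2 ≠ 0 := by positivity
    rw [← hzero]
    simp only [GfunC, ← hQdef, hdist, ← add_div]
    rw [div_left_inj' hs2]
    constructor <;> intro h <;> linarith [hkey]
end

section
/- Fix an integer n ≥ 2 and Q = π/(2n). The function F(x) = [x]_q[x+1]_q/[2]_q with q = e^{iQ} is superadditive on [0, n-1]: F(x+y) ≥ F(x) + F(y) for x, y, x+y ∈ [0, n-1], with equality if and only if xy(n-1-x-y) = 0. -/
open Real

/-- `F(x) = [x]_q [x+1]_q / [2]_q = sin(Qx)·sin(Q(x+1)) / (sin²(Q)·2cos(Q))`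
for `q = e^{iπ/(2n)}`. -/
noncomputable def Ffun (n : ℕ) (x : ℝ) : ℝ :=
  Real.sin (Qang n * x) * Real.sin (Qang n * (x + 1)) /
    (Real.sin (Qang n) ^ 2 * (2 * Real.cos (Qang n)))

lemma Ffun_key (a b c : ℝ) :
    sin (a+b) * sin (a+b+c) - sin a * sin (a+c) - sin b * sin (b+c)
      = 2 * cos (a+b+c) * sin a * sin b := by
  simp only [sin_add, cos_add]
  linear_combination (cos c * sin a ^ 2 + sin c * sin a * cos a) * (sin_sq_add_cos_sq b)
    + (cos c * sin b ^ 2 + sin c * sin b * cos b) * (sin_sq_add_cos_sq a)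

/-- Fix an integer `n ≥ 2` and `Q = π/(2n)`, `q = e^{iQ}`. The function
`F(x) = [x]_q[x+1]_q/[2]_q` is superadditive on `[0, n-1]`: `F(x+y) ≥ F(x) + F(y)` for
`x, y, x+y ∈ [0, n-1]`, with equality if and only if `xy(n-1-x-y) = 0`. -/
theorem Ffun_superadditive (n : ℕ) (hn : 2 ≤ n) (x y : ℝ)
    (hx : 0 ≤ x) (hy : 0 ≤ y) (hxy : x + y ≤ (n : ℝ) - 1) :
    Ffun n x + Ffun n y ≤ Ffun n (x + y) ∧
      (Ffun n (x + y) = Ffun n x + Ffun n y ↔ x * y * ((n : ℝ) - 1 - x - y) = 0) := by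
  set Q := Qang n with hQdef
  have hn2 : (2:ℝ) ≤ (n:ℝ) := by exact_mod_cast hn
  have hQpos : 0 < Q := by
    rw [hQdef, Qang]
    positivity
  have hQn : Q * n = π / 2 := by
    rw [hQdef, Qang]
    field_simp
  have hQlt : Q < π / 2 := by
    have : Q * 1 < Q * n := by
      apply mul_lt_mul_of_pos_left _ hQpos
      linarith
    linarith [this, hQn]
  have hpi : (0:ℝ) < π := Real.pi_pos
  set D := Real.sin Q ^ 2 * (2 * Real.cos Q) with hDdef
  have hsinQ : 0 < Real.sin Q := Real.sin_pos_of_pos_of_lt_pi hQpos (by linarith)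
  have hcosQ : 0 < Real.cos Q := Real.cos_pos_of_mem_Ioo ⟨by linarith, hQlt⟩
  have hD : 0 < D := by rw [hDdef]; positivity
  set A := Q * x + Q * y + Q with hAdef
  have hxn : x ≤ (n:ℝ) - 1 := by linarith
  have hyn : y ≤ (n:ℝ) - 1 := by linarith
  have hA1 : A ≤ π / 2 := by
    have h1 : Q * (x + y + 1) ≤ Q * n := by
      apply mul_le_mul_of_nonneg_left _ hQpos.le
      linarith
    have h2 : Q * (x + y + 1) = Q * x + Q * y + Q := by ring
    linarith [hQn]
  have hA0 : 0 < A := by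
    have h1 : 0 ≤ Q * x := mul_nonneg hQpos.le hx
    have h2 : 0 ≤ Q * y := mul_nonneg hQpos.le hy
    linarith
  have hcosA : 0 ≤ Real.cos A := Real.cos_nonneg_of_mem_Icc ⟨by linarith, hA1⟩
  have hQxlt : Q * x < π / 2 := by
    have h1 : Q * x ≤ Q * ((n:ℝ) - 1) := mul_le_mul_of_nonneg_left hxn hQpos.le
    have h2 : Q * ((n:ℝ) - 1) = Q * n - Q := by ring
    linarith [hQn]
  have hQylt : Q * y < π / 2 := by
    have h1 : Q * y ≤ Q * ((n:ℝ) - 1) := mul_le_mul_of_nonneg_left hyn hQpos.le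
    have h2 : Q * ((n:ℝ) - 1) = Q * n - Q := by ring
    linarith [hQn]
  have hsx : 0 ≤ Real.sin (Q * x) :=
    Real.sin_nonneg_of_nonneg_of_le_pi (mul_nonneg hQpos.le hx) (by linarith)
  have hsy : 0 ≤ Real.sin (Q * y) :=
    Real.sin_nonneg_of_nonneg_of_le_pi (mul_nonneg hQpos.le hy) (by linarith)
  have hdiff : Ffun n (x + y) - (Ffun n x + Ffun n y)
      = 2 * Real.cos A * Real.sin (Q * x) * Real.sin (Q * y) / D := by
    simp only [Ffun, ← hQdef, ← hDdef]
    rw [show Q * (x + y) = Q * x + Q * y by ring,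
        show Q * (x + y + 1) = Q * x + Q * y + Q by ring,
        show Q * (x + 1) = Q * x + Q by ring,
        show Q * (y + 1) = Q * y + Q by ring]
    rw [← add_div, ← sub_div, ← hAdef, sub_add_eq_sub_sub]
    congr 1
    exact Ffun_key (Q * x) (Q * y) Q
  have hnum_nonneg : 0 ≤ 2 * Real.cos A * Real.sin (Q * x) * Real.sin (Q * y) / D := by
    positivity
  constructor
  · linarith [hdiff]
  · -- equality characterisations
    have hcos_iff : Real.cos A = 0 ↔ x + y = (n:ℝ) - 1 := by
      constructor
      · intro h
        by_contra hne
        have hlt : x + y < (n:ℝ) - 1 := lt_of_le_of_ne hxy hne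
        have hAlt : A < π / 2 := by
          have h1 : Q * (x + y + 1) < Q * n := by
            apply mul_lt_mul_of_pos_left _ hQpos
            linarith
          have h2 : Q * (x + y + 1) = Q * x + Q * y + Q := by ring
          linarith [hQn]
        have : 0 < Real.cos A := Real.cos_pos_of_mem_Ioo ⟨by linarith, hAlt⟩
        linarith
      · intro h
        have : A = π / 2 := by rw [hAdef]; linear_combination Q * h + hQn
        rw [this, Real.cos_pi_div_two]
    have hsx_iff : Real.sin (Q * x) = 0 ↔ x = 0 := by
      constructor
      · intro h
        by_contra hne
        have hx0 : 0 < x := lt_of_le_of_ne hx (Ne.symm hne)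
        have : 0 < Real.sin (Q * x) :=
          Real.sin_pos_of_pos_of_lt_pi (mul_pos hQpos hx0) (by linarith)
        linarith
      · intro h; rw [h, mul_zero, Real.sin_zero]
    have hsy_iff : Real.sin (Q * y) = 0 ↔ y = 0 := by
      constructor
      · intro h
        by_contra hne
        have hy0 : 0 < y := lt_of_le_of_ne hy (Ne.symm hne)
        have : 0 < Real.sin (Q * y) :=
          Real.sin_pos_of_pos_of_lt_pi (mul_pos hQpos hy0) (by linarith)
        linarith
      · intro h; rw [h, mul_zero, Real.sin_zero]
    constructor
    · intro h
      have h0 : 2 * Real.cos A * Real.sin (Q * x) * Real.sin (Q * y) / D = 0 := by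
        rw [← hdiff, h]; ring
      have h0' : 2 * Real.cos A * Real.sin (Q * x) * Real.sin (Q * y) = 0 := by
        rcases div_eq_zero_iff.mp h0 with h' | h'
        · exact h'
        · exact absurd h' hD.ne'
      rcases mul_eq_zero.mp h0' with h' | h'
      · rcases mul_eq_zero.mp h' with h'' | h''
        · rcases mul_eq_zero.mp h'' with h3 | h3
          · norm_num at h3
          · have := hcos_iff.mp h3
            have : (n:ℝ) - 1 - x - y = 0 := by linarith
            rw [this, mul_zero]
        · rw [hsx_iff.mp h'', zero_mul, zero_mul]
      · rw [hsy_iff.mp h', mul_zero, zero_mul]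
    · intro h
      have hnum0 : 2 * Real.cos A * Real.sin (Q * x) * Real.sin (Q * y) = 0 := by
        rcases mul_eq_zero.mp h with h' | h'
        · rcases mul_eq_zero.mp h' with h'' | h''
          · rw [hsx_iff.mpr h'']; ring
          · rw [hsy_iff.mpr h'']; ring
        · have : x + y = (n:ℝ) - 1 := by linarith
          rw [hcos_iff.mpr this]; ring
      have : Ffun n (x + y) - (Ffun n x + Ffun n y) = 0 := by
        rw [hdiff, hnum0, zero_div]
      linarith
end

section
/- Let G be a bipartite graph of girth at least 2n, and let Δ₁, ..., Δ_m be pairwise antipodal edges (i.e., the minimal distance between vertices of distinct Δᵢ, Δⱼ is exactly n-1). Let r₁, ..., r_m be positive integers with rᵢ + rⱼ ≥ n for all i ≠ j. Then the graph G' obtained from G by attaching an m-pod with bases Δ₁, ..., Δ_m and legs of lengths r₁, ..., r_m (with leg endpoints chosen so G' is bipartite) still has girth at least 2n. -/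
/-- The vertex set of the graph obtained from `G` (on `V`) by attaching an `m`-pod:
the old vertices, a new center, and `r i - 1` new internal vertices on the `i`-th leg. -/
def podVerts (V : Type*) {m : ℕ} (r : Fin m → ℕ) : Type _ :=
  V ⊕ (Unit ⊕ (Σ i : Fin m, Fin (r i - 1)))

/-- The adjacency generating relation for the pod attachment: old edges of `G`; the path
(leg) `x i — p⟨i,0⟩ — ⋯ — p⟨i, r i - 2⟩ — z` of length `r i` from `x i` to the center `z`
(if `r i = 1` the leg is the single edge `x i — z`). -/
def podRel (V : Type*) {m : ℕ} (r : Fin m → ℕ) (G : SimpleGraph V) (x : Fin m → V) :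
    podVerts V r → podVerts V r → Prop
  | Sum.inl u, Sum.inl v => G.Adj u v
  | Sum.inl u, Sum.inr (Sum.inl _) => ∃ i, r i = 1 ∧ u = x i
  | Sum.inl u, Sum.inr (Sum.inr ⟨i, p⟩) => u = x i ∧ (p : ℕ) = 0
  | Sum.inr (Sum.inl _), Sum.inr (Sum.inr ⟨_i, p⟩) => (p : ℕ) + 2 = r _i
  | Sum.inr (Sum.inr ⟨i, p⟩), Sum.inr (Sum.inr ⟨i', p'⟩) => i = i' ∧ (p : ℕ) + 1 = (p' : ℕ)
  | _, _ => False

/-- The graph `G'` obtained from `G` by attaching the `m`-pod with bases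
`Δᵢ = {a i, b i}`, chosen leg endpoints `x i`, and legs of lengths `r i`. -/
def podGraph (V : Type*) {m : ℕ} (r : Fin m → ℕ) (G : SimpleGraph V) (x : Fin m → V) :
    SimpleGraph (podVerts V r) :=
  SimpleGraph.fromRel (podRel V r G x)


/-!
A cycle avoiding the center cannot enter a leg: its highest leg vertex would need two distinct
neighbours on the cycle that are not higher, but a leg vertex has only one. So it is a cycle
of `G`.

A cycle through the center leaves it towards the tops of two distinct legs `i ≠ j`. Away from the
center, height along a leg and projection of each leg to its foot are both 1-Lipschitz, so the
rest of the cycle has length at least `(r i - 1) + (r j - 1) + d(x i, x j)`. The cycle then has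
length at least `r i + r j + n - 1 ≥ 2n - 1`, and it is even because the pod graph is bipartite.
-/

namespace SimpleGraph

variable {V W : Type*} {G : SimpleGraph V} {u v : V}

namespace Walk

lemma apply_le_apply_add_length (f : V → ℕ) (p : G.Walk u v)
    (hf : ∀ d ∈ p.darts, f d.fst ≤ f d.snd + 1) : f u ≤ f v + p.length := by
  induction p with
  | nil => simp
  | cons h p ih =>
    have := hf _ List.mem_cons_self
    have := ih fun d hd => hf d (List.mem_cons_of_mem _ hd)
    simp only [length_cons] at *
    omega

lemma edist_apply_le_length {H : SimpleGraph W} (f : V → W) (p : G.Walk u v)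
    (hf : ∀ d ∈ p.darts, f d.fst = f d.snd ∨ H.Adj (f d.fst) (f d.snd)) :
    H.edist (f u) (f v) ≤ p.length := by
  induction p with
  | nil => simp
  | @cons u w v h p ih =>
    have hstep : H.edist (f u) (f w) ≤ 1 := by
      rcases hf _ List.mem_cons_self with heq | hadj
      · simp [heq]
      · exact (edist_eq_one_iff_adj.mpr hadj).le
    calc H.edist (f u) (f v) ≤ H.edist (f u) (f w) + H.edist (f w) (f v) :=
        SimpleGraph.edist_triangle
      _ ≤ 1 + p.length := add_le_add hstep (ih fun d hd => hf d (List.mem_cons_of_mem _ hd))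
      _ = (cons h p).length := by rw [length_cons, Nat.cast_succ, add_comm]

lemma IsCycle.exists_adj_ne {p : G.Walk u u} (hp : p.IsCycle) (hv : v ∈ p.support) :
    ∃ w₁ w₂, w₁ ≠ w₂ ∧ G.Adj v w₁ ∧ G.Adj v w₂ ∧
      w₁ ∈ p.support ∧ w₂ ∈ p.support := by
  obtain ⟨w₁, w₂, hne, hnbr⟩ :=
    Set.ncard_eq_two.mp (hp.ncard_neighborSet_toSubgraph_eq_two hv)
  have hadj : ∀ w ∈ p.toSubgraph.neighborSet v, G.Adj v w ∧ w ∈ p.support := fun w hw =>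
    ⟨p.toSubgraph.adj_sub hw, p.mem_verts_toSubgraph.mp (p.toSubgraph.edge_vert hw.symm)⟩
  obtain ⟨h₁, hm₁⟩ := hadj w₁ (by simp [hnbr])
  obtain ⟨h₂, hm₂⟩ := hadj w₂ (by simp [hnbr])
  exact ⟨w₁, w₂, hne, h₁, h₂, hm₁, hm₂⟩

lemma IsCycle.exists_walk_between_neighbors {p : G.Walk u u} (hp : p.IsCycle) :
    ∃ (v₁ v₂ : V) (q : G.Walk v₁ v₂), G.Adj u v₁ ∧ G.Adj u v₂ ∧ v₁ ≠ v₂ ∧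
      u ∉ q.support ∧ p.length = q.length + 2 := by
  cases p with
  | nil => exact absurd rfl hp.ne_nil
  | @cons _ v₁ _ h q =>
    have hq : ¬ q.Nil := not_nil_of_isCycle_cons hp
    have hqpath : q.IsPath := ((cons_isCycle_iff q h).mp hp).1
    refine ⟨v₁, q.penultimate, q.dropLast, h, (q.adj_penultimate hq).symm, ?_, ?_, ?_⟩
    · simpa [snd_cons, penultimate_cons_of_not_nil _ _ hq] using hp.snd_ne_penultimate
    · have := hqpath.support_nodup
      rw [← support_dropLast_concat hq, List.nodup_append] at this
      exact fun hu => this.2.2 u hu u (List.mem_singleton_self u) rfl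
    · have := length_dropLast_add_one hq
      rw [length_cons]
      omega

lemma IsCycle.egirth_induce_le_length {s : Set V} {p : G.Walk u u} (hp : p.IsCycle)
    (hs : ∀ v ∈ p.support, v ∈ s) : (G.induce s).egirth ≤ p.length := by
  have hcyc : (p.induce s hs).IsCycle := by
    have := map_induce p hs ▸ hp
    exact (isCycle_map_iff_of_injective (Embedding.induce (G := G) s).injective).mp this
  simpa [← length_map (Embedding.induce (G := G) s).toHom, map_induce] using egirth_le_length hcyc

end Walk

end SimpleGraph

-- Lets `simp` and `rcases` see the sum type underneath the pod's vertices.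
attribute [reducible] podVerts

namespace PodGraph

open SimpleGraph

variable {V : Type*} {m : ℕ} {r : Fin m → ℕ} {G : SimpleGraph V} {x : Fin m → V}

def centerVert : podVerts V r := .inr (.inl ())

def legVert (i : Fin m) (k : Fin (r i - 1)) : podVerts V r := .inr (.inr ⟨i, k⟩)

/-- Distance to the foot `x i` along the leg; old vertices, and (as a junk value) the center,
get `0`. -/
def height : podVerts V r → ℕ
  | .inr (.inr ⟨_, k⟩) => k + 1
  | _ => 0

@[simp] lemma height_inl (a : V) : height (.inl a : podVerts V r) = 0 := rfl

@[simp] lemma height_legVert (i : Fin m) (k : Fin (r i - 1)) :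
    height (legVert i k : podVerts V r) = k + 1 := rfl

/-- `z` is a junk value for the center. -/
def foot (x : Fin m → V) (z : V) : podVerts V r → V
  | .inl u => u
  | .inr (.inl _) => z
  | .inr (.inr ⟨i, _⟩) => x i

def closedLeg (x : Fin m → V) (i : Fin m) : Set (podVerts V r) :=
  insert (.inl (x i)) (Set.range (legVert i))

lemma podGraph_adj {u v : podVerts V r} :
    (podGraph V r G x).Adj u v ↔ u ≠ v ∧ (podRel V r G x u v ∨ podRel V r G x v u) :=
  fromRel_adj ..

lemma podGraph_adj_inl {u v : V} : (podGraph V r G x).Adj (.inl u) (.inl v) ↔ G.Adj u v := by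
  rw [podGraph_adj]
  exact ⟨fun ⟨_, h⟩ => h.elim id .symm,
    fun h => ⟨fun he => h.ne (Sum.inl_injective he), .inl h⟩⟩

def podEmbedding : G ↪g podGraph V r G x where
  toFun := .inl
  inj' := Sum.inl_injective
  map_rel_iff' := podGraph_adj_inl

lemma height_le_height_add_one {u v : podVerts V r} (h : (podGraph V r G x).Adj u v)
    (hu : u ≠ centerVert) (hv : v ≠ centerVert) : height u ≤ height v + 1 := by
  obtain ⟨-, h | h⟩ := podGraph_adj.mp h <;>
  rcases u with a | ⟨⟩ | ⟨i, k⟩ <;> rcases v with b | ⟨⟩ | ⟨j, l⟩ <;>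
    simp_all [podRel, height, centerVert]
  omega

lemma foot_eq_or_adj {u v : podVerts V r} (z : V) (h : (podGraph V r G x).Adj u v)
    (hu : u ≠ centerVert) (hv : v ≠ centerVert) :
    foot x z u = foot x z v ∨ G.Adj (foot x z u) (foot x z v) := by
  obtain ⟨-, h | h⟩ := podGraph_adj.mp h <;>
  rcases u with a | ⟨⟩ | ⟨i, k⟩ <;> rcases v with b | ⟨⟩ | ⟨j, l⟩ <;>
    simp_all [podRel, foot, centerVert, G.adj_comm]

lemma mem_closedLeg_of_adj_legVert {i : Fin m} {k : Fin (r i - 1)} {u : podVerts V r}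
    (h : (podGraph V r G x).Adj (legVert i k) u) (hu : u ≠ centerVert) :
    u ∈ closedLeg x i ∧ (height u = k ∨ height u = k + 2) := by
  obtain ⟨-, h | h⟩ := podGraph_adj.mp h <;> rcases u with a | ⟨⟩ | ⟨j, l⟩ <;>
    simp only [podRel, legVert, centerVert, ne_eq, not_true_eq_false] at h hu
  · obtain ⟨rfl, hl⟩ := h
    exact ⟨Set.mem_insert_of_mem _ ⟨l, rfl⟩, .inr (by simp [height]; omega)⟩
  · obtain ⟨rfl, hk⟩ := h
    exact ⟨Set.mem_insert _ _, .inl (by simp [height, hk])⟩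
  · obtain ⟨rfl, hl⟩ := h
    exact ⟨Set.mem_insert_of_mem _ ⟨l, rfl⟩, .inl (by simp [height]; omega)⟩

lemma exists_mem_closedLeg_of_adj_center {v : podVerts V r}
    (h : (podGraph V r G x).Adj centerVert v) :
    ∃ i, v ∈ closedLeg x i ∧ height v + 1 = r i := by
  obtain ⟨-, h | h⟩ := podGraph_adj.mp h <;> rcases v with a | ⟨⟩ | ⟨j, l⟩ <;>
    simp only [podRel, centerVert] at h
  · exact ⟨j, Set.mem_insert_of_mem _ ⟨l, rfl⟩, by simp [height]; omega⟩
  · obtain ⟨i, hi, rfl⟩ := h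
    exact ⟨i, Set.mem_insert _ _, by simp [height, hi]⟩

lemma eq_of_mem_closedLeg {i : Fin m} {v w : podVerts V r} (hv : v ∈ closedLeg x i)
    (hw : w ∈ closedLeg x i) (h : height v = height w) : v = w := by
  rcases hv with rfl | ⟨k, rfl⟩ <;> rcases hw with rfl | ⟨l, rfl⟩ <;>
    simp_all [height, legVert, Fin.ext_iff]

lemma mem_range_inl_of_height_eq_zero {v : podVerts V r} (hv : v ≠ centerVert)
    (h : height v = 0) :
    v ∈ Set.range Sum.inl := by
  rcases v with a | ⟨⟩ | ⟨j, l⟩ <;> simp_all [height, centerVert]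

def podColor (x : Fin m → V) (c : V → ZMod 2) (l : ZMod 2) : podVerts V r → ZMod 2
  | .inl u => c u
  | .inr (.inl _) => l
  | .inr (.inr ⟨i, k⟩) => c (x i) + (k + 1 : ℕ)

lemma podColor_ne_of_podRel {c : V → ZMod 2} (hbip : ∀ u v, G.Adj u v → c u ≠ c v)
    {l : ZMod 2} (hxt : ∀ i, c (x i) = l + (r i : ZMod 2)) {u v : podVerts V r}
    (h : podRel V r G x u v) :
    podColor x c l u ≠ podColor x c l v := by
  rcases u with a | ⟨⟩ | ⟨i, k⟩ <;> rcases v with b | ⟨⟩ | ⟨j, k'⟩ <;>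
    simp only [podRel, podColor] at h ⊢
  · exact hbip a b h
  · obtain ⟨i, hi, rfl⟩ := h
    rw [hxt, hi]
    generalize l = t
    revert t
    decide
  · obtain ⟨rfl, hk'⟩ := h
    rw [hk']
    generalize c (x j) = t
    revert t
    decide
  · rw [hxt, show (r j : ZMod 2) = ((k' + 2 : ℕ) : ZMod 2) by rw [h]]
    push_cast
    generalize (k' : ZMod 2) = s
    generalize l = t
    revert s t
    decide
  · obtain ⟨rfl, hk⟩ := h
    rw [← hk]
    push_cast
    generalize (k : ZMod 2) = s
    generalize c (x i) = t
    revert s t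
    decide

lemma podGraph_colorable {c : V → ZMod 2} (hbip : ∀ u v, G.Adj u v → c u ≠ c v) {l : ZMod 2}
    (hxt : ∀ i, c (x i) = l + (r i : ZMod 2)) : (podGraph V r G x).Colorable 2 := by
  refine ⟨Coloring.mk (podColor x c l) fun h => ?_⟩
  obtain ⟨-, h | h⟩ := podGraph_adj.mp h
  · exact podColor_ne_of_podRel hbip hxt h
  · exact (podColor_ne_of_podRel hbip hxt h).symm

section Walks

variable {u v : podVerts V r} (P : (podGraph V r G x).Walk u v)

lemma forall_darts_ne_centerVert (hP : centerVert ∉ P.support) :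
    ∀ d ∈ P.darts, d.fst ≠ centerVert ∧ d.snd ≠ centerVert := fun _ hd =>
  ⟨ne_of_mem_of_not_mem (P.dart_fst_mem_support_of_mem_darts hd) hP,
    ne_of_mem_of_not_mem (P.dart_snd_mem_support_of_mem_darts hd) hP⟩

lemma height_le_height_add_length (hP : centerVert ∉ P.support) :
    height u ≤ height v + P.length :=
  P.apply_le_apply_add_length height fun d hd =>
    height_le_height_add_one d.adj (forall_darts_ne_centerVert P hP d hd).1
      (forall_darts_ne_centerVert P hP d hd).2

lemma edist_foot_le_length (z : V) (hP : centerVert ∉ P.support) :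
    G.edist (foot x z u) (foot x z v) ≤ P.length :=
  P.edist_apply_le_length (foot x z) fun d hd =>
    foot_eq_or_adj z d.adj (forall_darts_ne_centerVert P hP d hd).1
      (forall_darts_ne_centerVert P hP d hd).2

/-- Without the center, leg `i` is attached to the old graph at its foot `x i` only. -/
lemma exists_walk_from_foot {i : Fin m} (hP : centerVert ∉ P.support) (hu : u ∈ closedLeg x i)
    (hv : v ∉ Set.range (legVert i)) :
    ∃ Q : (podGraph V r G x).Walk (.inl (x i)) v,
      centerVert ∉ Q.support ∧ height u + Q.length ≤ P.length := by
  classical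
  rcases hu with rfl | hu
  · exact ⟨P, hP, by simp⟩
  obtain ⟨d, hd, ⟨k, hk⟩, hsnd⟩ := P.exists_boundary_dart _ hu hv
  have hfoot : d.snd = .inl (x i) := by
    have := (mem_closedLeg_of_adj_legVert (hk ▸ d.adj) (forall_darts_ne_centerVert P hP d hd).2).1
    exact this.resolve_right hsnd
  have hmem : .inl (x i) ∈ P.support := hfoot ▸ P.dart_snd_mem_support_of_mem_darts hd
  have hup := height_le_height_add_length (P.takeUntil _ hmem)
    fun h => hP (P.support_takeUntil_subset_support hmem h)
  have hlen := congrArg Walk.length (P.take_spec hmem)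
  rw [Walk.length_append] at hlen
  refine ⟨P.dropUntil _ hmem, fun h => hP (P.support_dropUntil_subset_support hmem h), ?_⟩
  rw [height_inl, zero_add] at hup
  omega

lemma height_add_height_add_edist_le_length {i j : Fin m} (hij : i ≠ j)
    (hP : centerVert ∉ P.support) (hu : u ∈ closedLeg x i) (hv : v ∈ closedLeg x j) :
    ((height u + height v : ℕ) : ℕ∞) + G.edist (x i) (x j) ≤ P.length := by
  have hv' : v ∉ Set.range (legVert i) := by
    rintro ⟨k, rfl⟩
    rcases hv with h | ⟨l, h⟩
    · cases h
    · exact hij (congrArg Sigma.fst (Sum.inr_injective (Sum.inr_injective h))).symm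
  obtain ⟨Q, hQ, hQlen⟩ := exists_walk_from_foot P hP hu hv'
  obtain ⟨R, hR, hRlen⟩ := exists_walk_from_foot Q.reverse (by simpa using hQ) hv
    (by rintro ⟨k, h⟩; cases h)
  have hdist : G.edist (x i) (x j) ≤ R.length := by
    rw [edist_comm]
    exact edist_foot_le_length R (x i) hR
  rw [Walk.length_reverse] at hRlen
  calc ((height u + height v : ℕ) : ℕ∞) + G.edist (x i) (x j)
      ≤ ((height u + height v : ℕ) : ℕ∞) + R.length := by gcongr
    _ ≤ P.length := by exact_mod_cast (by omega)

end Walks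

lemma support_subset_range_inl_of_isCycle {a : podVerts V r}
    {C : (podGraph V r G x).Walk a a} (hC : C.IsCycle) (hcen : centerVert ∉ C.support) :
    ∀ v ∈ C.support, v ∈ Set.range Sum.inl := by
  classical
  obtain ⟨v, hv, hmax⟩ := C.support.toFinset.exists_max_image height ⟨a, by simp⟩
  simp only [List.mem_toFinset] at hv hmax
  suffices height v = 0 from fun w hw =>
    mem_range_inl_of_height_eq_zero (ne_of_mem_of_not_mem hw hcen) (by have := hmax w hw; omega)
  by_contra h0
  obtain ⟨i, k, rfl⟩ : ∃ i k, v = legVert i k := by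
    rcases v with a | ⟨⟩ | ⟨i, k⟩
    · exact absurd rfl h0
    · exact absurd hv hcen
    · exact ⟨i, k, rfl⟩
  have hlower : ∀ w, (podGraph V r G x).Adj (legVert i k) w → w ∈ C.support →
      w ∈ closedLeg x i ∧ height w = k := fun w h hw => by
    obtain ⟨hcl, hh⟩ := mem_closedLeg_of_adj_legVert h (ne_of_mem_of_not_mem hw hcen)
    have := hmax w hw
    rw [height_legVert] at this
    exact ⟨hcl, by omega⟩
  obtain ⟨w₁, w₂, hne, h₁, h₂, hw₁, hw₂⟩ := hC.exists_adj_ne hv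
  obtain ⟨hcl₁, hh₁⟩ := hlower w₁ h₁ hw₁
  obtain ⟨hcl₂, hh₂⟩ := hlower w₂ h₂ hw₂
  exact hne (eq_of_mem_closedLeg hcl₁ hcl₂ (hh₁.trans hh₂.symm))

end PodGraph

open SimpleGraph PodGraph

theorem podGraph_girth_general (V : Type*) (G : SimpleGraph V) (n : ℕ)
    (c : V → ZMod 2) (hbip : ∀ u v, G.Adj u v → c u ≠ c v)
    (hgirth : (2 * n : ℕ) ≤ G.egirth)
    (m : ℕ) (a b : Fin m → V)
    (hant : ∀ i j, i ≠ j →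
      (∀ u v, (u = a i ∨ u = b i) → (v = a j ∨ v = b j) → ((n - 1 : ℕ) : ℕ∞) ≤ G.edist u v) ∧
      (∃ u v, (u = a i ∨ u = b i) ∧ (v = a j ∨ v = b j) ∧ G.edist u v = ((n - 1 : ℕ) : ℕ∞)))
    (r : Fin m → ℕ) (hrr : ∀ i j, i ≠ j → n ≤ r i + r j)
    (x : Fin m → V) (hx : ∀ i, x i = a i ∨ x i = b i)
    (l : ZMod 2) (hxt : ∀ i, c (x i) = l + (r i : ZMod 2)) :
    (2 * n : ℕ) ≤ (podGraph V r G x).egirth := by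
  classical
  refine le_egirth.mpr fun _ C hC => ?_
  by_cases hcen : centerVert ∈ C.support
  · obtain ⟨v₁, v₂, P, h₁, h₂, hne, hP, hlen⟩ :=
      (hC.rotate hcen).exists_walk_between_neighbors
    obtain ⟨i, hv₁, hi⟩ := exists_mem_closedLeg_of_adj_center h₁
    obtain ⟨j, hv₂, hj⟩ := exists_mem_closedLeg_of_adj_center h₂
    have hij : i ≠ j := by
      rintro rfl
      exact hne (eq_of_mem_closedLeg hv₁ hv₂ (by omega))
    have hPlen : height v₁ + height v₂ + (n - 1) ≤ P.length := by
      have := (add_le_add_right ((hant i j hij).1 _ _ (hx i) (hx j)) _).trans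
        (height_add_height_add_edist_le_length P hij hP hv₁ hv₂)
      exact_mod_cast this
    obtain ⟨k, hk⟩ := two_colorable_iff_forall_loop_even.mp
      (podGraph_colorable hbip hxt) _ (C.rotate centerVert hcen)
    have := hrr i j hij
    rw [Walk.length_rotate] at hk hlen
    exact_mod_cast (show 2 * n ≤ C.length by omega)
  · calc ((2 * n : ℕ) : ℕ∞) ≤ G.egirth := hgirth
      _ = ((podGraph V r G x).induce (Set.range Sum.inl)).egirth :=
        (podEmbedding (x := x)).isoInduceRange.egirth_eq
      _ ≤ C.length := hC.egirth_induce_le_length (support_subset_range_inl_of_isCycle hC hcen)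

/-- Let `G` be a bipartite graph (with type function `c`) of girth `≥ 2n`,
and let `Δ₁, …, Δ_m` (edges `{a i, b i}`) be pairwise antipodal edges: the minimal distance
between vertices of distinct `Δᵢ, Δⱼ` is exactly `n-1`. Let `r₁, …, r_m` be positive
integers with `rᵢ + rⱼ ≥ n` for `i ≠ j`. Then the graph obtained from `G` by attaching an
`m`-pod with bases `Δ₁, …, Δ_m` and legs of lengths `r₁, …, r_m` — with leg endpoints
`x i ∈ Δᵢ` chosen by the parity condition `type(x i) = l + rᵢ (mod 2)` making the new graph
bipartite — still has girth at least `2n`. -/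
theorem podGraph_girth (V : Type*) (G : SimpleGraph V) (n : ℕ) (hn : 2 ≤ n)
    (c : V → ZMod 2) (hbip : ∀ u v, G.Adj u v → c u ≠ c v)
    (hgirth : (2 * n : ℕ) ≤ G.egirth)
    (m : ℕ) (a b : Fin m → V) (hedge : ∀ i, G.Adj (a i) (b i))
    (hant : ∀ i j, i ≠ j →
      (∀ u v, (u = a i ∨ u = b i) → (v = a j ∨ v = b j) → ((n - 1 : ℕ) : ℕ∞) ≤ G.edist u v) ∧
      (∃ u v, (u = a i ∨ u = b i) ∧ (v = a j ∨ v = b j) ∧ G.edist u v = ((n - 1 : ℕ) : ℕ∞)))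
    (r : Fin m → ℕ) (hr : ∀ i, 0 < r i) (hrr : ∀ i j, i ≠ j → n ≤ r i + r j)
    (x : Fin m → V) (hx : ∀ i, x i = a i ∨ x i = b i)
    (l : ZMod 2) (hxt : ∀ i, c (x i) = l + (r i : ZMod 2)) :
    (2 * n : ℕ) ≤ (podGraph V r G x).egirth :=
  podGraph_girth_general V G n c hbip hgirth m a b hant r hrr x hx l hxt
end

section
/- Let X be a thick rank-2 spherical building with Weyl group I₂(n) (equivalently, a bipartite graph of girth exactly 2n, diameter n, every vertex of valence ≥ 3). Let Δ₁, Δ₂ be antipodal chambers (edges at combinatorial distance n-1), and let r₁, r₂ ≥ 0 be integers with r₁ + r₂ = n-1. Then the intersection B_{r₁}(Δ₁) ∩ B_{r₂}(Δ₂) of combinatorial balls consists of exactly two vertices, one of each type. -/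
/-- The combinatorial ball of radius `r` around the edge `{a, b}`: all vertices within
extended distance `r` of one of the endpoints. -/
def edgeBall {V : Type*} (G : SimpleGraph V) (a b : V) (r : ℕ) : Set V :=
  {w | min (G.edist w a) (G.edist w b) ≤ (r : ℕ∞)}

/-! The four distances between the ends of `Δ₁` and `Δ₂` lie in `{n-1, n}`, and in a bipartite
graph adjacent vertices have different distances from any vertex; so, after possibly swapping
`a₂` and `b₂`, `d(a₁,a₂) = d(b₁,b₂) = n-1` while the cross distances are `n`. A vertex of the
intersection is then within `r₁` of one end of `Δ₁` and `r₂` of the matching end of `Δ₂` (the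
crossed combination violates the triangle inequality), so it lies on a geodesic of length `n-1`
at distance `r₁` from its start. Two distinct such geodesics would close up a cycle of length
`< 2n`, so each matching pair of ends contributes exactly one vertex, and the two vertices have
different types because they are equally far from the adjacent `a₁` and `b₁`. -/

namespace SimpleGraph

variable {V : Type*} {G : SimpleGraph V}

lemma Walk.color_eq_add_length {c : V → ZMod 2} (hc : ∀ u v, G.Adj u v → c u ≠ c v)
    {u v : V} (p : G.Walk u v) : c v = c u + p.length := by
  induction p with
  | nil => simp
  | @cons u w v huw p ih =>
    have hstep : c w = c u + 1 := by
      have := hc u w huw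
      generalize c u = a, c w = b at this
      revert a b; decide
    rw [Walk.length_cons, ih, hstep]
    push_cast
    ring

lemma Reachable.color_eq_add_dist {c : V → ZMod 2} (hc : ∀ u v, G.Adj u v → c u ≠ c v)
    {u v : V} (h : G.Reachable u v) : c v = c u + G.dist u v := by
  obtain ⟨p, hp⟩ := h.exists_walk_length_eq_dist
  rw [← hp]
  exact p.color_eq_add_length hc

lemma Connected.dist_ne_of_adj (hG : G.Connected) {c : V → ZMod 2}
    (hc : ∀ u v, G.Adj u v → c u ≠ c v) (x : V) {a b : V} (hab : G.Adj a b) :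
    G.dist x a ≠ G.dist x b := by
  intro h
  apply hc a b hab
  rw [(hG.preconnected x a).color_eq_add_dist hc, (hG.preconnected x b).color_eq_add_dist hc, h]

lemma Connected.exists_dist_eq_of_dist_eq_add (hG : G.Connected) {x y : V} {r s : ℕ}
    (h : G.dist x y = r + s) : ∃ w, G.dist x w = r ∧ G.dist w y = s := by
  obtain ⟨p, hp⟩ := hG.exists_walk_length_eq_dist x y
  refine ⟨p.getVert r, ?_, ?_⟩
  · rw [← length_eq_dist_of_subwalk hp (p.isSubwalk_take r), Walk.take_length]
    omega
  · rw [← length_eq_dist_of_subwalk hp (p.isSubwalk_drop r), Walk.drop_length]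
    omega

lemma Walk.eq_of_length_eq_dist {x y : V} (hxy : 2 * G.dist x y < G.egirth)
    {p q : G.Walk x y} (hp : p.length = G.dist x y) (hq : q.length = G.dist x y) : p = q := by
  by_contra hne
  obtain ⟨_, -, -, c, hc, hlen⟩ :=
    (p.isPath_of_length_eq_dist hp).exists_isCycle_length_le_add_of_ne
      (q.isPath_of_length_eq_dist hq) hne
  have hshort : (c.length : ℕ∞) < G.egirth :=
    calc (c.length : ℕ∞) ≤ 2 * G.dist x y := by
          exact_mod_cast (by omega : c.length ≤ 2 * G.dist x y)
      _ < G.egirth := hxy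
  exact hshort.not_ge (egirth_le_length hc)

lemma Connected.eq_of_dist_le_of_dist_le (hG : G.Connected) {x y u w : V} {r s : ℕ}
    (hxy : G.dist x y = r + s) (hgirth : 2 * G.dist x y < G.egirth)
    (hu : G.dist x u = r) (hu' : G.dist u y = s) (hw : G.dist x w ≤ r) (hw' : G.dist w y ≤ s) :
    w = u := by
  have hw_eq : G.dist x w = r ∧ G.dist w y = s := by
    have := hG.dist_triangle (u := x) (v := w) (w := y)
    omega
  have getVert_join : ∀ {z} (p₁ : G.Walk x z) (p₂ : G.Walk z y),
      (p₁.append p₂).getVert p₁.length = z := by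
    simp [Walk.getVert_append']
  obtain ⟨p₁, hp₁⟩ := hG.exists_walk_length_eq_dist x w
  obtain ⟨p₂, hp₂⟩ := hG.exists_walk_length_eq_dist w y
  obtain ⟨q₁, hq₁⟩ := hG.exists_walk_length_eq_dist x u
  obtain ⟨q₂, hq₂⟩ := hG.exists_walk_length_eq_dist u y
  have hpq : p₁.append p₂ = q₁.append q₂ :=
    Walk.eq_of_length_eq_dist hgirth (by simp; omega) (by simp; omega)
  rw [← getVert_join p₁ p₂, ← getVert_join q₁ q₂, hpq, hp₁, hq₁, hw_eq.1, hu]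

lemma Connected.mem_edgeBall_iff (hG : G.Connected) {a b w : V} {r : ℕ} :
    w ∈ edgeBall G a b r ↔ G.dist w a ≤ r ∨ G.dist w b ≤ r := by
  simp only [edgeBall, Set.mem_ofPred_eq, min_le_iff, ← (hG.preconnected w a).coe_dist_eq_edist,
    ← (hG.preconnected w b).coe_dist_eq_edist, Nat.cast_le]

lemma edgeBall_comm (a b : V) (r : ℕ) : edgeBall G a b r = edgeBall G b a r := by
  simp [edgeBall, min_comm]

lemma Connected.edgeBall_inter_eq_pair (hG : G.Connected) {a₁ b₁ a₂ b₂ u v : V} {r₁ r₂ : ℕ}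
    (hgirth : 2 * (r₁ + r₂) < G.egirth)
    (haa : G.dist a₁ a₂ = r₁ + r₂) (hbb : G.dist b₁ b₂ = r₁ + r₂)
    (hab : r₁ + r₂ < G.dist a₁ b₂) (hba : r₁ + r₂ < G.dist b₁ a₂)
    (hu₁ : G.dist a₁ u = r₁) (hu₂ : G.dist u a₂ = r₂)
    (hv₁ : G.dist b₁ v = r₁) (hv₂ : G.dist v b₂ = r₂) :
    edgeBall G a₁ b₁ r₁ ∩ edgeBall G a₂ b₂ r₂ = {u, v} := by
  ext w
  simp only [Set.mem_inter_iff, hG.mem_edgeBall_iff, Set.mem_insert_iff, Set.mem_singleton_iff]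
  rw [dist_comm (u := w) (v := a₁), dist_comm (u := w) (v := b₁)]
  constructor
  · rintro ⟨hw₁ | hw₁, hw₂ | hw₂⟩
    · exact .inl (hG.eq_of_dist_le_of_dist_le haa (by rw [haa]; exact_mod_cast hgirth)
        hu₁ hu₂ hw₁ hw₂)
    · have := hG.dist_triangle (u := a₁) (v := w) (w := b₂)
      omega
    · have := hG.dist_triangle (u := b₁) (v := w) (w := a₂)
      omega
    · exact .inr (hG.eq_of_dist_le_of_dist_le hbb (by rw [hbb]; exact_mod_cast hgirth)
        hv₁ hv₂ hw₁ hw₂)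
  · rintro (rfl | rfl)
    · exact ⟨.inl hu₁.le, .inl hu₂.le⟩
    · exact ⟨.inr hv₁.le, .inr hv₂.le⟩

lemma Connected.exists_edgeBall_inter_eq_pair (hG : G.Connected) {c : V → ZMod 2}
    (hc : ∀ u v, G.Adj u v → c u ≠ c v) {a₁ b₁ a₂ b₂ : V} (h₁ : G.Adj a₁ b₁) {r₁ r₂ : ℕ}
    (hgirth : 2 * (r₁ + r₂) < G.egirth)
    (haa : G.dist a₁ a₂ = r₁ + r₂) (hbb : G.dist b₁ b₂ = r₁ + r₂)
    (hab : r₁ + r₂ < G.dist a₁ b₂) (hba : r₁ + r₂ < G.dist b₁ a₂) :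
    ∃ u v : V, u ≠ v ∧ c u ≠ c v ∧ edgeBall G a₁ b₁ r₁ ∩ edgeBall G a₂ b₂ r₂ = {u, v} := by
  obtain ⟨u, hu₁, hu₂⟩ := hG.exists_dist_eq_of_dist_eq_add haa
  obtain ⟨v, hv₁, hv₂⟩ := hG.exists_dist_eq_of_dist_eq_add hbb
  have hcuv : c u ≠ c v := by
    rw [(hG.preconnected a₁ u).color_eq_add_dist hc, (hG.preconnected b₁ v).color_eq_add_dist hc,
      hu₁, hv₁, Ne, add_left_inj]
    exact hc a₁ b₁ h₁
  exact ⟨u, v, fun h => hcuv (congrArg c h), hcuv,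
    hG.edgeBall_inter_eq_pair hgirth haa hbb hab hba hu₁ hu₂ hv₁ hv₂⟩

end SimpleGraph

open SimpleGraph

theorem ball_inter_antipodal_general (V : Type*) (G : SimpleGraph V) (n : ℕ) (hn : 2 ≤ n)
    (c : V → ZMod 2) (hbip : ∀ u v, G.Adj u v → c u ≠ c v)
    (hgirth : G.egirth = (2 * n : ℕ))
    (hdiam : ∀ u v : V, G.edist u v ≤ (n : ℕ∞))
    (a₁ b₁ a₂ b₂ : V) (h₁ : G.Adj a₁ b₁) (h₂ : G.Adj a₂ b₂)
    (hant : (∀ u v, (u = a₁ ∨ u = b₁) → (v = a₂ ∨ v = b₂) →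
        ((n - 1 : ℕ) : ℕ∞) ≤ G.edist u v) ∧
      (∃ u v, (u = a₁ ∨ u = b₁) ∧ (v = a₂ ∨ v = b₂) ∧ G.edist u v = ((n - 1 : ℕ) : ℕ∞)))
    (r₁ r₂ : ℕ) (hr : r₁ + r₂ = n - 1) :
    ∃ u v : V, u ≠ v ∧ c u ≠ c v ∧
      edgeBall G a₁ b₁ r₁ ∩ edgeBall G a₂ b₂ r₂ = {u, v} := by
  have hG : G.Connected :=
    { preconnected := fun u v => reachable_of_edist_ne_top (ne_top_of_le_ne_top
        (ENat.natCast_ne_top n) (hdiam u v))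
      nonempty := ⟨a₁⟩ }
  have hbounds : ∀ u v, (u = a₁ ∨ u = b₁) → (v = a₂ ∨ v = b₂) →
      n - 1 ≤ G.dist u v ∧ G.dist u v ≤ n := by
    intro u v hu hv
    have hlow := hant.1 u v hu hv
    have hhigh := hdiam u v
    rw [← (hG.preconnected u v).coe_dist_eq_edist] at hlow hhigh
    exact ⟨by exact_mod_cast hlow, by exact_mod_cast hhigh⟩
  have haa := hbounds a₁ a₂ (.inl rfl) (.inl rfl)
  have hab := hbounds a₁ b₂ (.inl rfl) (.inr rfl)
  have hba := hbounds b₁ a₂ (.inr rfl) (.inl rfl)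
  have hbb := hbounds b₁ b₂ (.inr rfl) (.inr rfl)
  have ha₁ := hG.dist_ne_of_adj hbip a₁ h₂
  have hb₁ := hG.dist_ne_of_adj hbip b₁ h₂
  have ha₂ := hG.dist_ne_of_adj hbip a₂ h₁.symm
  have hgirth' : 2 * (r₁ + r₂) < G.egirth := by
    rw [hgirth]; exact_mod_cast (by omega : 2 * (r₁ + r₂) < 2 * n)
  rw [dist_comm (u := a₂), dist_comm (u := a₂)] at ha₂
  by_cases hstraight : G.dist a₁ a₂ = n - 1
  · exact hG.exists_edgeBall_inter_eq_pair hbip h₁ hgirth' (by omega) (by omega) (by omega)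
      (by omega)
  · rw [edgeBall_comm a₂]
    exact hG.exists_edgeBall_inter_eq_pair hbip h₁ hgirth' (by omega) (by omega) (by omega)
      (by omega)

/-- Let `X` be a thick rank-2 spherical building with Weyl group `I₂(n)`:
a bipartite graph (type function `c`) of girth exactly `2n`, diameter `n`, every vertex of
valence `≥ 3`. Let `Δ₁ = {a₁,b₁}`, `Δ₂ = {a₂,b₂}` be antipodal chambers (edges at
combinatorial distance `n-1`), and `r₁, r₂ ≥ 0` integers with `r₁ + r₂ = n-1`. Then
`B_{r₁}(Δ₁) ∩ B_{r₂}(Δ₂)` consists of exactly two vertices, one of each type. -/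
theorem ball_inter_antipodal (V : Type*) (G : SimpleGraph V) (n : ℕ) (hn : 2 ≤ n)
    (c : V → ZMod 2) (hbip : ∀ u v, G.Adj u v → c u ≠ c v)
    (hgirth : G.egirth = (2 * n : ℕ))
    (hdiam : ∀ u v : V, G.edist u v ≤ (n : ℕ∞))
    (hthick : ∀ v : V, ∃ w₁ w₂ w₃, w₁ ≠ w₂ ∧ w₁ ≠ w₃ ∧ w₂ ≠ w₃ ∧
      G.Adj v w₁ ∧ G.Adj v w₂ ∧ G.Adj v w₃)
    (a₁ b₁ a₂ b₂ : V) (h₁ : G.Adj a₁ b₁) (h₂ : G.Adj a₂ b₂)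
    (hant : (∀ u v, (u = a₁ ∨ u = b₁) → (v = a₂ ∨ v = b₂) →
        ((n - 1 : ℕ) : ℕ∞) ≤ G.edist u v) ∧
      (∃ u v, (u = a₁ ∨ u = b₁) ∧ (v = a₂ ∨ v = b₂) ∧ G.edist u v = ((n - 1 : ℕ) : ℕ∞)))
    (r₁ r₂ : ℕ) (hr : r₁ + r₂ = n - 1) :
    ∃ u v : V, u ≠ v ∧ c u ≠ c v ∧
      edgeBall G a₁ b₁ r₁ ∩ edgeBall G a₂ b₂ r₂ = {u, v} :=
  ball_inter_antipodal_general V G n hn c hbip hgirth hdiam a₁ b₁ a₂ b₂ h₁ h₂ hant r₁ r₂ hr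
end

section
/- Let X be a thick rank-2 spherical building with Weyl group I₂(n), and let Δ₁, Δ₂ be two chambers at combinatorial distance at most n-2 (non-antipodal). If r₁ + r₂ = n-1 with r₁, r₂ > 0, then B_{r₁}(Δ₁) ∩ B_{r₂}(Δ₂) contains vertices of both types. -/
/-!
Take `u ∈ Δ₁`, `v ∈ Δ₂` at distance `d ≤ n - 2 < r₁ + r₂`. If `d < r₁`, the chamber `Δ₂` itself
lies in both balls. Otherwise the edge of a `u`–`v` geodesic between positions `r₁ - 1` and `r₁`
does. Either way the intersection contains an edge, whose endpoints have different types.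
-/

open SimpleGraph

namespace SimpleGraph.Walk

variable {V : Type*} {G : SimpleGraph V} {u v : V}

lemma edist_getVert_le (p : G.Walk u v) (i : ℕ) : G.edist u (p.getVert i) ≤ i :=
  (p.take i).edist_le.trans <| by simp [take_length]

lemma edist_getVert_le_length_sub (p : G.Walk u v) (i : ℕ) :
    G.edist (p.getVert i) v ≤ (p.length - i : ℕ) :=
  (p.drop i).edist_le.trans_eq <| by rw [drop_length]

/-- The witness is the edge of `p` between positions `r₁ - 1` and `r₁`. -/
lemma exists_adj_edist_le (p : G.Walk u v) {r₁ r₂ : ℕ} (hr₁ : 0 < r₁) (hle : r₁ ≤ p.length)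
    (hlt : p.length < r₁ + r₂) :
    ∃ w w', G.Adj w w' ∧ G.edist u w ≤ r₁ ∧ G.edist u w' ≤ r₁ ∧
      G.edist w v ≤ r₂ ∧ G.edist w' v ≤ r₂ := by
  obtain ⟨i, rfl⟩ : ∃ i, r₁ = i + 1 := ⟨r₁ - 1, by omega⟩
  refine ⟨p.getVert i, p.getVert (i + 1), p.adj_getVert_succ (by omega), ?_, ?_, ?_, ?_⟩
  · exact (p.edist_getVert_le i).trans (by norm_cast; omega)
  · exact p.edist_getVert_le (i + 1)
  · exact (p.edist_getVert_le_length_sub i).trans (by norm_cast; omega)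
  · exact (p.edist_getVert_le_length_sub (i + 1)).trans (by norm_cast; omega)

end SimpleGraph.Walk

section edgeBall

variable {V : Type*} {G : SimpleGraph V} {a b u v w : V} {r : ℕ}

lemma edist_le_one_of_adj_of_mem (h : G.Adj a b) (hu : u = a ∨ u = b) (hv : v = a ∨ v = b) :
    G.edist u v ≤ 1 := by
  rw [edist_le_one_iff_adj_or_eq]
  rcases hu with rfl | rfl <;> rcases hv with rfl | rfl <;> simp [h, h.symm]

lemma mem_edgeBall_of_edist_le (hu : u = a ∨ u = b) (hw : G.edist w u ≤ r) :
    w ∈ edgeBall G a b r := by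
  rcases hu with rfl | rfl
  · exact min_le_of_left_le hw
  · exact min_le_of_right_le hw

lemma mem_edgeBall_of_mem (hw : w = a ∨ w = b) : w ∈ edgeBall G a b r :=
  mem_edgeBall_of_edist_le hw (by simp)

lemma exists_adj_mem_edgeBall_inter {a₁ b₁ a₂ b₂ : V} (h₂ : G.Adj a₂ b₂)
    (hu : u = a₁ ∨ u = b₁) (hv : v = a₂ ∨ v = b₂) {r₁ r₂ : ℕ} (hr₁ : 0 < r₁)
    (huv : G.edist u v < (r₁ + r₂ : ℕ)) :
    ∃ w w', G.Adj w w' ∧ w ∈ edgeBall G a₁ b₁ r₁ ∩ edgeBall G a₂ b₂ r₂ ∧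
      w' ∈ edgeBall G a₁ b₁ r₁ ∩ edgeBall G a₂ b₂ r₂ := by
  obtain ⟨p, hp⟩ := exists_walk_of_edist_ne_top (ne_top_of_lt huv)
  rw [← hp, Nat.cast_lt] at huv
  by_cases hshort : p.length < r₁
  · have near (x : V) (hx : x = a₂ ∨ x = b₂) : x ∈ edgeBall G a₁ b₁ r₁ ∩ edgeBall G a₂ b₂ r₂ := by
      refine ⟨mem_edgeBall_of_edist_le hu ?_, mem_edgeBall_of_mem hx⟩
      calc G.edist x u ≤ G.edist x v + G.edist v u := SimpleGraph.edist_triangle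
        _ ≤ 1 + p.length := by
          gcongr
          · exact edist_le_one_of_adj_of_mem h₂ hx hv
          · rw [SimpleGraph.edist_comm, hp]
        _ ≤ r₁ := by norm_cast; omega
    exact ⟨a₂, b₂, h₂, near a₂ (.inl rfl), near b₂ (.inr rfl)⟩
  · obtain ⟨w, w', hadj, hw₁, hw'₁, hw₂, hw'₂⟩ :=
      p.exists_adj_edist_le hr₁ (not_lt.mp hshort) huv
    refine ⟨w, w', hadj, ⟨?_, ?_⟩, ⟨?_, ?_⟩⟩
    · exact mem_edgeBall_of_edist_le hu (SimpleGraph.edist_comm.trans_le hw₁)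
    · exact mem_edgeBall_of_edist_le hv hw₂
    · exact mem_edgeBall_of_edist_le hu (SimpleGraph.edist_comm.trans_le hw'₁)
    · exact mem_edgeBall_of_edist_le hv hw'₂

end edgeBall

lemma ZMod.eq_or_eq_of_ne {x y : ZMod 2} (hxy : x ≠ y) (z : ZMod 2) : z = x ∨ z = y := by
  revert x y z
  decide

theorem ball_inter_nonantipodal_general (V : Type*) (G : SimpleGraph V) (n : ℕ)
    (c : V → ZMod 2) (hbip : ∀ u v, G.Adj u v → c u ≠ c v)
    (a₁ b₁ a₂ b₂ : V) (h₂ : G.Adj a₂ b₂)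
    (hclose : ∃ u v, (u = a₁ ∨ u = b₁) ∧ (v = a₂ ∨ v = b₂) ∧
      G.edist u v ≤ ((n - 2 : ℕ) : ℕ∞))
    (r₁ r₂ : ℕ) (hr₁ : 0 < r₁) (hr : r₁ + r₂ = n - 1) :
    ∀ τ : ZMod 2, ∃ w, c w = τ ∧ w ∈ edgeBall G a₁ b₁ r₁ ∩ edgeBall G a₂ b₂ r₂ := by
  intro τ
  obtain ⟨u, v, hu, hv, huv⟩ := hclose
  -- `0 < r₁` forces `2 ≤ n`, so the truncated `n - 2` really is `r₁ + r₂ - 1`.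
  have hlt : G.edist u v < (r₁ + r₂ : ℕ) := huv.trans_lt (by norm_cast; omega)
  obtain ⟨w, w', hadj, hw, hw'⟩ := exists_adj_mem_edgeBall_inter h₂ hu hv hr₁ hlt
  rcases ZMod.eq_or_eq_of_ne (hbip w w' hadj) τ with rfl | rfl
  exacts [⟨w, rfl, hw⟩, ⟨w', rfl, hw'⟩]

/-- Let `X` be a thick rank-2 spherical building with Weyl group `I₂(n)`:
a bipartite graph (type function `c`) of girth `2n`, diameter `n`, all vertex degrees `≥ 3`.
Let `Δ₁ = {a₁,b₁}`, `Δ₂ = {a₂,b₂}` be two non-antipodal chambers (at combinatorial distance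
at most `n-2`). If `r₁ + r₂ = n-1` with `r₁, r₂ > 0`, then `B_{r₁}(Δ₁) ∩ B_{r₂}(Δ₂)`
contains vertices of both types. -/
theorem ball_inter_nonantipodal (V : Type*) (G : SimpleGraph V) (n : ℕ) (hn : 2 ≤ n)
    (c : V → ZMod 2) (hbip : ∀ u v, G.Adj u v → c u ≠ c v)
    (hgirth : G.egirth = (2 * n : ℕ))
    (hdiam : ∀ u v : V, G.edist u v ≤ (n : ℕ∞))
    (hthick : ∀ v : V, ∃ w₁ w₂ w₃, w₁ ≠ w₂ ∧ w₁ ≠ w₃ ∧ w₂ ≠ w₃ ∧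
      G.Adj v w₁ ∧ G.Adj v w₂ ∧ G.Adj v w₃)
    (a₁ b₁ a₂ b₂ : V) (h₁ : G.Adj a₁ b₁) (h₂ : G.Adj a₂ b₂)
    (hclose : ∃ u v, (u = a₁ ∨ u = b₁) ∧ (v = a₂ ∨ v = b₂) ∧
      G.edist u v ≤ ((n - 2 : ℕ) : ℕ∞))
    (r₁ r₂ : ℕ) (hr₁ : 0 < r₁) (hr₂ : 0 < r₂) (hr : r₁ + r₂ = n - 1) :
    ∀ τ : ZMod 2, ∃ w, c w = τ ∧ w ∈ edgeBall G a₁ b₁ r₁ ∩ edgeBall G a₂ b₂ r₂ :=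
  ball_inter_nonantipodal_general V G n c hbip a₁ b₁ a₂ b₂ h₂ hclose r₁ r₂ hr₁ hr
end
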